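/- Let f = g - h with g proper lsc γ₁-convex and h continuous γ₂-convex, γ₁ + γ₂ > 0, and f bounded below. Suppose {x_k}, {y_k} satisfy y_k ∈ ∂h(x_k), x_{k+1} ∈ ∂g*(y_k), and {x_k} is bounded. Then every subsequential limit x* of {x_k} is a stationary point of f, i.e., ∂g(x*) ∩ ∂h(x*) ≠ ∅. -/

import Mathlib

noncomputable section

/-- `ℝⁿ`. -/
abbrev E (n : ℕ) := EuclideanSpace ℝ (Fin n)

/-- Convex subdifferential of an extended-real-valued function. -/

def subdiffE {n : ℕ} (g : E n → EReal) (x : E n) : Set (E n) :=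
  {v | ∀ y, ((inner ℝ v (y - x) : ℝ) : EReal) + g x ≤ g y}

/-- Convex subdifferential of a real-valued function. -/

def subdiffR {n : ℕ} (h : E n → ℝ) (x : E n) : Set (E n) :=
  {w | ∀ y, (inner ℝ w (y - x) : ℝ) ≤ h y - h x}

/-- Fenchel conjugate. -/

def fconj {n : ℕ} (g : E n → EReal) (y : E n) : EReal :=
  ⨆ x, (((inner ℝ y x : ℝ) : EReal) - g x)

/-- Convexity for extended-real-valued functions. -/

def ConvexE {n : ℕ} (g : E n → EReal) : Prop :=
  ∀ x y : E n, ∀ t : ℝ, 0 ≤ t → t ≤ 1 →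
    g (t • x + (1 - t) • y) ≤ (t : EReal) * g x + ((1 - t : ℝ) : EReal) * g y

/-- `γ`-convexity for extended-real-valued functions. -/

def GammaConvexE {n : ℕ} (g : E n → EReal) (γ : ℝ) : Prop :=
  ConvexE (fun x => g x - ((γ / 2 * ‖x‖ ^ 2 : ℝ) : EReal))

/-!
Since `g` is closed and convex, it coincides with its biconjugate (Fenchel–Moreau, by separating
points from its closed convex epigraph), so `x (k + 1) ∈ ∂g*(y k)` turns into
`y k ∈ ∂g(x (k + 1))`. Adding the strong subgradient inequalities expressing
`y (k + 1) ∈ ∂g(x (k + 2)) ∩ ∂h(x (k + 1))` gives, for `f = g - h`, the sufficient decrease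
`f (x (k + 2)) + (γ₁ + γ₂) / 2 * ‖x (k + 2) - x (k + 1)‖ ^ 2 ≤ f (x (k + 1))`; as `f` is bounded
below, `x (k + 1) - x k → 0`. The subgradients `y k` of the continuous `h` on a bounded set are
bounded, so along a further subsequence `y k → y*`, and the subdifferential graphs of the lower
semicontinuous `g` and `h` are closed, which puts `y*` in `∂g(x*) ∩ ∂h(x*)`.
-/

open Filter Topology

theorem norm_smul_add_one_sub_smul_sq {F : Type*} [NormedAddCommGroup F] [InnerProductSpace ℝ F]
    (x y : F) (t : ℝ) :
    ‖t • x + (1 - t) • y‖ ^ 2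
      = t * ‖x‖ ^ 2 + (1 - t) * ‖y‖ ^ 2 - t * (1 - t) * ‖x - y‖ ^ 2 := by
  simp only [← real_inner_self_eq_norm_sq, inner_add_left, inner_add_right, inner_sub_left,
    inner_sub_right, real_inner_smul_left, real_inner_smul_right, real_inner_comm x y]
  ring

theorem add_le_of_forall_add_one_sub_mul_le {a b c : ℝ}
    (h : ∀ t : ℝ, 0 < t → t ≤ 1 → a + (1 - t) * b ≤ c) : a + b ≤ c := by
  have hlim : Tendsto (fun t : ℝ => a + (1 - t) * b) (𝓝[>] 0) (𝓝 (a + b)) := by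
    have hcont : Continuous fun t : ℝ => a + (1 - t) * b := by fun_prop
    simpa using (hcont.tendsto 0).mono_left nhdsWithin_le_nhds
  refine le_of_tendsto hlim ?_
  filter_upwards [Ioc_mem_nhdsGT one_pos] with t ht using h t ht.1 ht.2

theorem exists_inner_separation {F : Type*} [NormedAddCommGroup F] [InnerProductSpace ℝ F]
    [CompleteSpace F] {S : Set (F × ℝ)} (hcv : Convex ℝ S) (hcl : IsClosed S) {x : F} {r : ℝ}
    (hx : (x, r) ∉ S) :
    ∃ (v : F) (s u : ℝ), inner ℝ v x + r * s < u ∧ ∀ p ∈ S, u < inner ℝ v p.1 + p.2 * s := by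
  obtain ⟨f, u, hfx, hfS⟩ := geometric_hahn_banach_point_closed hcv hcl hx
  set v := (InnerProductSpace.toDual ℝ F).symm (f.comp (ContinuousLinearMap.inl ℝ F ℝ))
  have hf : ∀ p : F × ℝ, f p = inner ℝ v p.1 + p.2 * f (0, 1) := by
    rintro ⟨z, t⟩
    rw [InnerProductSpace.toDual_symm_apply, ContinuousLinearMap.comp_apply,
      ContinuousLinearMap.inl_apply, ← smul_eq_mul, ← map_smul, ← map_add]
    simp
  exact ⟨v, f (0, 1), u, hf (x, r) ▸ hfx, fun p hp => hf p ▸ hfS p hp⟩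

section

variable {n : ℕ}

def epigraphE (g : E n → EReal) : Set (E n × ℝ) := {p | g p.1 ≤ p.2}

theorem isClosed_epigraphE {g : E n → EReal} (hg : LowerSemicontinuous g) :
    IsClosed (epigraphE g) :=
  hg.isClosed_epigraph.preimage (continuous_id.prodMap continuous_coe_real_ereal)

theorem GammaConvexE.apply_combo_le {g : E n → EReal} {γ : ℝ} (hg : GammaConvexE g γ)
    {x y : E n} {a b : ℝ} (hx : g x = a) (hy : g y = b) {t : ℝ} (ht₀ : 0 ≤ t) (ht₁ : t ≤ 1) :
    g (t • x + (1 - t) • y)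
      ≤ ((t * a + (1 - t) * b - γ / 2 * t * (1 - t) * ‖x - y‖ ^ 2 : ℝ) : EReal) := by
  have h := hg x y t ht₀ ht₁
  simp only [hx, hy, ← EReal.coe_sub, ← EReal.coe_mul] at h
  rw [← EReal.coe_add, EReal.sub_le_iff_le_add (.inl (EReal.coe_ne_bot _))
    (.inl (EReal.coe_ne_top _)), ← EReal.coe_add, norm_smul_add_one_sub_smul_sq] at h
  convert h using 2
  ring

theorem GammaConvexE.convex_epigraphE {g : E n → EReal} {γ : ℝ} (hg : GammaConvexE g γ)
    (hγ : 0 ≤ γ) (hnb : ∀ x, g x ≠ ⊥) : Convex ℝ (epigraphE g) := by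
  rintro ⟨x, s⟩ hx ⟨y, t⟩ hy a b ha hb hab
  obtain rfl : b = 1 - a := by linarith
  change g x ≤ s at hx
  change g y ≤ t at hy
  change g (a • x + (1 - a) • y) ≤ ((a * s + (1 - a) * t : ℝ) : EReal)
  have hfin : ∀ {z : E n} {r : ℝ}, g z ≤ r → g z = ((g z).toReal : EReal) := fun hz =>
    (EReal.coe_toReal (ne_top_of_le_ne_top (EReal.coe_ne_top _) hz) (hnb _)).symm
  have hxs : (g x).toReal ≤ s := EReal.coe_le_coe_iff.1 (hfin hx ▸ hx)
  have hyt : (g y).toReal ≤ t := EReal.coe_le_coe_iff.1 (hfin hy ▸ hy)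
  refine (hg.apply_combo_le (hfin hx) (hfin hy) ha (by linarith)).trans (EReal.coe_le_coe_iff.2 ?_)
  nlinarith [mul_nonneg (mul_nonneg (mul_nonneg hγ ha) hb) (sq_nonneg ‖x - y‖)]

def IsAffineMinorant (g : E n → EReal) (u : E n) (β : ℝ) : Prop :=
  ∀ z, ((inner ℝ u z + β : ℝ) : EReal) ≤ g z

theorem inner_sub_le_fconj (g : E n → EReal) (u z : E n) :
    (inner ℝ u z : EReal) - g z ≤ fconj g u :=
  le_iSup (fun z => (inner ℝ u z : EReal) - g z) z

theorem IsAffineMinorant.fconj_le {g : E n → EReal} {u : E n} {β : ℝ}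
    (h : IsAffineMinorant g u β) : fconj g u ≤ ((-β : ℝ) : EReal) :=
  iSup_le fun z => EReal.sub_le_of_le_add' <| by
    rw [EReal.coe_neg, ← sub_eq_add_neg, EReal.le_sub_iff_add_le (.inl (EReal.coe_ne_bot β))
      (.inl (EReal.coe_ne_top β)), ← EReal.coe_add]
    exact h z

theorem isAffineMinorant_of_forall_epigraphE {g : E n → EReal} {u : E n} {β : ℝ}
    (h : ∀ p ∈ epigraphE g, inner ℝ u p.1 + β ≤ p.2) : IsAffineMinorant g u β :=
  fun z => EReal.le_of_forall_lt_iff_le.1 fun t ht => EReal.coe_le_coe_iff.2 (h (z, t) ht.le)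

theorem exists_isAffineMinorant_gt_of_separation {g : E n → EReal} {v x : E n} {r s u : ℝ}
    (hs : 0 < s) (hx : inner ℝ v x + r * s < u)
    (hsep : ∀ p ∈ epigraphE g, u < inner ℝ v p.1 + p.2 * s) :
    ∃ (w : E n) (β : ℝ), IsAffineMinorant g w β ∧ r < inner ℝ w x + β := by
  refine ⟨-s⁻¹ • v, u / s, isAffineMinorant_of_forall_epigraphE fun p hp => ?_, ?_⟩
  · have := hsep p hp
    rw [real_inner_smul_left, show -s⁻¹ * inner ℝ v p.1 + u / s = (u - inner ℝ v p.1) / s by ring,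
      div_le_iff₀ hs]
    linarith
  · rw [real_inner_smul_left, show -s⁻¹ * inner ℝ v x + u / s = (u - inner ℝ v x) / s by ring,
      lt_div_iff₀ hs]
    linarith

section FenchelMoreau

variable {g : E n → EReal} (hlsc : LowerSemicontinuous g) (hcv : Convex ℝ (epigraphE g))
include hlsc hcv

theorem exists_isAffineMinorant {z₀ : E n} {t₀ : ℝ} (hz₀ : g z₀ = t₀) :
    ∃ (u : E n) (β : ℝ), IsAffineMinorant g u β := by
  have hout : (z₀, t₀ - 1) ∉ epigraphE g := by
    change ¬ g z₀ ≤ ((t₀ - 1 : ℝ) : EReal)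
    rw [hz₀, EReal.coe_le_coe_iff]
    linarith
  obtain ⟨v, s, u, hlt, hsep⟩ := exists_inner_separation hcv (isClosed_epigraphE hlsc) hout
  have hs : 0 < s := by
    have := hsep (z₀, t₀) hz₀.le
    dsimp only at this hlt
    linarith
  obtain ⟨w, β, hwβ, -⟩ := exists_isAffineMinorant_gt_of_separation hs hlt hsep
  exact ⟨w, β, hwβ⟩

theorem exists_isAffineMinorant_gt {z₀ : E n} {t₀ : ℝ} (hz₀ : g z₀ = t₀) {x : E n} {r : ℝ}
    (hr : (r : EReal) < g x) :
    ∃ (u : E n) (β : ℝ), IsAffineMinorant g u β ∧ r < inner ℝ u x + β := by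
  have hout : (x, r) ∉ epigraphE g := not_le.2 hr
  obtain ⟨v, s, u, hlt, hsep⟩ := exists_inner_separation hcv (isClosed_epigraphE hlsc) hout
  have hs : 0 ≤ s := by
    by_contra! hs
    have := hsep (z₀, max t₀ ((u - inner ℝ v z₀) / s)) (hz₀.trans_le (by simp))
    have := mul_le_mul_of_nonpos_right (le_max_right t₀ ((u - inner ℝ v z₀) / s)) hs.le
    rw [div_mul_cancel₀ _ hs.ne] at this
    dsimp only at *
    linarith
  rcases hs.lt_or_eq with hs | rfl
  · exact exists_isAffineMinorant_gt_of_separation hs hlt hsep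
  -- a vertical hyperplane: tilt a nonvertical minorant by a large multiple of it
  obtain ⟨w, b, hwb⟩ := exists_isAffineMinorant hlsc hcv hz₀
  simp only [mul_zero, add_zero] at hlt hsep
  set lam := max 0 ((r - inner ℝ w x - b + 1) / (u - inner ℝ v x))
  have hlam : r - inner ℝ w x - b + 1 ≤ lam * (u - inner ℝ v x) :=
    (div_le_iff₀ (by linarith)).1 (le_max_right _ _)
  refine ⟨w - lam • v, b + lam * u, isAffineMinorant_of_forall_epigraphE fun p hp => ?_, ?_⟩
  · have h₁ := (hwb p.1).trans hp
    have h₂ := mul_le_mul_of_nonneg_left (hsep p hp).le (le_max_left _ _ : 0 ≤ lam)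
    rw [EReal.coe_le_coe_iff] at h₁
    rw [inner_sub_left, real_inner_smul_left]
    linarith
  · rw [inner_sub_left, real_inner_smul_left]
    linarith

end FenchelMoreau

theorem le_fconj_fconj {g : E n → EReal} (hlsc : LowerSemicontinuous g)
    (hcv : Convex ℝ (epigraphE g)) {z₀ : E n} {t₀ : ℝ} (hz₀ : g z₀ = t₀) (x : E n) :
    g x ≤ fconj (fconj g) x := by
  refine EReal.ge_of_forall_gt_iff_ge.1 fun r hr => ?_
  obtain ⟨u, β, hmin, hgt⟩ := exists_isAffineMinorant_gt hlsc hcv hz₀ hr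
  calc (r : EReal) ≤ ((inner ℝ x u - -β : ℝ) : EReal) := by
        rw [real_inner_comm, sub_neg_eq_add]; exact EReal.coe_le_coe_iff.2 hgt.le
    _ ≤ (inner ℝ x u : EReal) - fconj g u := by
        rw [EReal.coe_sub]; exact EReal.sub_le_sub le_rfl hmin.fconj_le
    _ ≤ fconj (fconj g) x := inner_sub_le_fconj (fconj g) x u

theorem mem_subdiffE_of_mem_subdiffE_fconj {g : E n → EReal} {x y : E n}
    (hgx : g x ≤ fconj (fconj g) x) (hx : x ∈ subdiffE (fconj g) y) : y ∈ subdiffE g x := by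
  intro z
  have hyoung := inner_sub_le_fconj g y z
  induction hc : fconj g y using EReal.rec with
  | bot =>
    rw [hc, le_bot_iff, sub_eq_add_neg, EReal.add_eq_bot_iff, EReal.neg_eq_bot_iff] at hyoung
    rw [hyoung.resolve_left (EReal.coe_ne_bot _)]
    exact le_top
  | top =>
    have hx_bot : fconj (fconj g) x = ⊥ := by
      refine le_bot_iff.1 (iSup_le fun u => ?_)
      have := hx u
      rw [hc, EReal.coe_add_top, top_le_iff] at this
      rw [this, EReal.sub_top]
    rw [hx_bot, le_bot_iff] at hgx
    rw [hgx, EReal.add_bot]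
    exact bot_le
  | coe c =>
    -- `hx` bounds `g**(x)` by `⟨x, y⟩ - g*(y)`, and Young's inequality bounds `g z` from below
    have hgx' : g x ≤ ((inner ℝ x y - c : ℝ) : EReal) := hgx.trans <| iSup_le fun u => by
      refine EReal.sub_le_of_le_add' ?_
      have := add_le_add_right (hc ▸ hx u) ((inner ℝ x y - c : ℝ) : EReal)
      rw [← EReal.coe_add, ← EReal.coe_add, inner_sub_right] at this
      rw [add_comm]
      simpa using this
    rw [hc, EReal.sub_le_iff_le_add (.inr (EReal.coe_ne_top c)) (.inr (EReal.coe_ne_bot c)),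
      add_comm, ← EReal.sub_le_iff_le_add (.inl (EReal.coe_ne_bot c)) (.inl (EReal.coe_ne_top c))]
      at hyoung
    calc ((inner ℝ y (z - x) : ℝ) : EReal) + g x
        ≤ ((inner ℝ y (z - x) : ℝ) : EReal) + ((inner ℝ x y - c : ℝ) : EReal) := by gcongr
      _ = (inner ℝ y z : EReal) - c := by
        rw [← EReal.coe_add, ← EReal.coe_sub, inner_sub_right, real_inner_comm x y]
        ring_nf
      _ ≤ g z := hyoung

theorem GammaConvexE.le_of_mem_subdiffE {g : E n → EReal} {γ : ℝ} (hg : GammaConvexE g γ)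
    {x v : E n} (hv : v ∈ subdiffE g x) {d : ℝ} (hd : g x = d) (z : E n) :
    ((d + inner ℝ v (z - x) + γ / 2 * ‖z - x‖ ^ 2 : ℝ) : EReal) ≤ g z := by
  induction hz : g z using EReal.rec with
  | bot =>
    have := hv z
    rw [hz, hd, ← EReal.coe_add, le_bot_iff] at this
    exact absurd this (EReal.coe_ne_bot _)
  | top => exact le_top
  | coe a =>
    refine EReal.coe_le_coe_iff.2 (add_le_of_forall_add_one_sub_mul_le fun t ht₀ ht₁ => ?_)
    have hcombo := hg.apply_combo_le hz hd ht₀.le ht₁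
    have hsub := hv (t • z + (1 - t) • x)
    rw [show t • z + (1 - t) • x - x = t • (z - x) by module, real_inner_smul_right, hd,
      ← EReal.coe_add] at hsub
    have key := EReal.coe_le_coe_iff.1 (hsub.trans hcombo)
    refine le_of_mul_le_mul_left ?_ ht₀
    nlinarith

theorem subdiffE_coe (h : E n → ℝ) (x : E n) :
    subdiffE (fun x => (h x : EReal)) x = subdiffR h x := by
  ext w
  simp only [subdiffE, subdiffR, ← EReal.coe_add, EReal.coe_le_coe_iff, le_sub_iff_add_le]

theorem gammaConvexE_coe {h : E n → ℝ} {γ : ℝ}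
    (hh : ConvexOn ℝ Set.univ (fun x => h x - γ / 2 * ‖x‖ ^ 2)) :
    GammaConvexE (fun x => (h x : EReal)) γ := by
  intro x y t ht₀ ht₁
  have := hh.2 (Set.mem_univ x) (Set.mem_univ y) ht₀ (sub_nonneg.2 ht₁) (by ring)
  simp only [smul_eq_mul] at this
  dsimp only
  exact_mod_cast this

theorem mem_subdiffE_of_tendsto {g : E n → EReal} (hlsc : LowerSemicontinuous g) {ι : Type*}
    {l : Filter ι} [l.NeBot] {a b : ι → E n} {x v : E n} (ha : Tendsto a l (𝓝 x))
    (hb : Tendsto b l (𝓝 v)) (hab : ∀ i, b i ∈ subdiffE g (a i)) : v ∈ subdiffE g x := by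
  intro z
  rw [add_comm, ← EReal.le_sub_iff_add_le (.inl (EReal.coe_ne_bot _)) (.inl (EReal.coe_ne_top _))]
  refine EReal.ge_of_forall_gt_iff_ge.1 fun c hc => ?_
  rw [EReal.le_sub_iff_add_le (.inl (EReal.coe_ne_bot _)) (.inl (EReal.coe_ne_top _)),
    ← EReal.coe_add]
  have hlim : Tendsto (fun i => c + inner ℝ (b i) (z - a i)) l (𝓝 (c + inner ℝ v (z - x))) :=
    tendsto_const_nhds.add (hb.inner (tendsto_const_nhds.sub ha))
  refine (isClosed_Iic.preimage continuous_coe_real_ereal).mem_of_tendsto hlim ?_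
  filter_upwards [ha.eventually (hlsc x c hc)] with i hi
  calc ((c + inner ℝ (b i) (z - a i) : ℝ) : EReal)
      ≤ (inner ℝ (b i) (z - a i) : EReal) + g (a i) := by
        rw [add_comm, EReal.coe_add]; gcongr
    _ ≤ g z := hab i z

theorem exists_norm_le_of_mem_subdiffR {h : E n → ℝ} (hh : Continuous h) (C : ℝ) :
    ∃ M : ℝ, ∀ x w, ‖x‖ ≤ C → w ∈ subdiffR h x → ‖w‖ ≤ M := by
  obtain ⟨B, hB⟩ :=
    (isCompact_closedBall (0 : E n) (C + 1)).exists_bound_of_continuousOn hh.continuousOn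
  refine ⟨2 * B, fun x w hx hw => ?_⟩
  have hu : ‖‖w‖⁻¹ • w‖ ≤ 1 := by
    rw [norm_smul, norm_inv, norm_norm]
    exact inv_mul_le_one
  have hwu := hw (x + ‖w‖⁻¹ • w)
  rw [add_sub_cancel_left, real_inner_smul_right, real_inner_self_eq_norm_sq, sq, ← mul_assoc,
    inv_mul_mul_self] at hwu
  have h₁ := abs_le.1 (hB (x + ‖w‖⁻¹ • w)
    (mem_closedBall_zero_iff.2 ((norm_add_le _ _).trans (add_le_add hx hu))))
  have h₂ := abs_le.1 (hB x (mem_closedBall_zero_iff.2 (by linarith)))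
  linarith

theorem tendsto_zero_of_sufficient_decrease {F : Type*} [SeminormedAddCommGroup F]
    {f : ℕ → ℝ} {u : ℕ → F} {c m : ℝ} (hc : 0 < c) (hm : ∀ k, m ≤ f k)
    (hdec : ∀ k, f (k + 1) + c * ‖u k‖ ^ 2 ≤ f k) : Tendsto u atTop (𝓝 0) := by
  have hanti : Antitone f := antitone_nat_of_succ_le fun k => by
    nlinarith [hdec k, mul_nonneg hc.le (sq_nonneg ‖u k‖)]
  have hf : Tendsto f atTop (𝓝 (⨅ k, f k)) :=
    tendsto_atTop_ciInf hanti ⟨m, Set.forall_mem_range.2 hm⟩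
  have hdiff : Tendsto (fun k => (f k - f (k + 1)) / c) atTop (𝓝 0) := by
    simpa using (hf.sub (hf.comp (tendsto_add_atTop_nat 1))).div_const c
  have hsq : Tendsto (fun k => ‖u k‖ ^ 2) atTop (𝓝 0) :=
    squeeze_zero (fun k => sq_nonneg _)
      (fun k => by rw [le_div_iff₀ hc]; linarith [hdec k]) hdiff
  rw [tendsto_zero_iff_norm_tendsto_zero]
  simpa using hsq.sqrt

theorem ne_top_of_mem_subdiffE {g : E n → EReal} {x v z₀ : E n} (hz₀ : g z₀ ≠ ⊤)
    (hv : v ∈ subdiffE g x) : g x ≠ ⊤ := fun htop => by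
  have := hv z₀
  rw [htop, EReal.coe_add_top, top_le_iff] at this
  exact hz₀ this

theorem dca_descent {g : E n → EReal} {h : E n → ℝ} {γ₁ γ₂ : ℝ} (hg : GammaConvexE g γ₁)
    (hh : GammaConvexE (fun x => (h x : EReal)) γ₂) {x y : ℕ → E n}
    (hy : ∀ k, y k ∈ subdiffR h (x k)) (hyg : ∀ k, y k ∈ subdiffE g (x (k + 1)))
    {G : ℕ → ℝ} (hG : ∀ k, g (x (k + 1)) = G k) (k : ℕ) :
    G (k + 1) - h (x (k + 2)) + (γ₁ + γ₂) / 2 * ‖x (k + 2) - x (k + 1)‖ ^ 2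
      ≤ G k - h (x (k + 1)) := by
  have hgk := hg.le_of_mem_subdiffE (hyg (k + 1)) (hG (k + 1)) (x (k + 1))
  rw [hG k, EReal.coe_le_coe_iff, norm_sub_rev] at hgk
  have hhk := hh.le_of_mem_subdiffE ((subdiffE_coe h _).symm ▸ hy (k + 1)) rfl (x (k + 2))
  rw [EReal.coe_le_coe_iff] at hhk
  have hinner : inner ℝ (y (k + 1)) (x (k + 1) - x (k + 2))
      = -inner ℝ (y (k + 1)) (x (k + 2) - x (k + 1)) := by
    rw [← inner_neg_right, neg_sub]
  linarith

end

theorem dca_subsequential_limits_stationary_general {n : ℕ}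
    (g : E n → EReal) (h : E n → ℝ) (γ₁ γ₂ : ℝ)
    (hγ₁ : 0 ≤ γ₁) (hγ : 0 < γ₁ + γ₂)
    (hnb : ∀ x, g x ≠ ⊥) (hp : ∃ x, g x ≠ ⊤) (hglsc : LowerSemicontinuous g)
    (hg : GammaConvexE g γ₁) (hhcont : Continuous h)
    (hh : ConvexOn ℝ Set.univ (fun x => h x - γ₂ / 2 * ‖x‖ ^ 2))
    (hbelow : ∃ m : ℝ, ∀ x : E n, (m : EReal) ≤ g x - (h x : EReal))
    (x y : ℕ → E n)
    (hy : ∀ k, y k ∈ subdiffR h (x k))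
    (hx : ∀ k, x (k + 1) ∈ subdiffE (fconj g) (y k))
    (hbdd : ∃ C : ℝ, ∀ k, ‖x k‖ ≤ C) :
    ∀ xstar : E n, ∀ φ : ℕ → ℕ, StrictMono φ →
      Filter.Tendsto (fun k => x (φ k)) Filter.atTop (nhds xstar) →
      (subdiffE g xstar ∩ subdiffR h xstar).Nonempty := by
  intro xstar φ hφ hxφ
  obtain ⟨z₀, hz₀⟩ := hp
  obtain ⟨m, hm⟩ := hbelow
  obtain ⟨C, hC⟩ := hbdd
  have hyg : ∀ k, y k ∈ subdiffE g (x (k + 1)) := fun k =>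
    mem_subdiffE_of_mem_subdiffE_fconj (le_fconj_fconj hglsc (hg.convex_epigraphE hγ₁ hnb)
      (EReal.coe_toReal hz₀ (hnb z₀)).symm _) (hx k)
  have hG : ∀ k, g (x (k + 1)) = (g (x (k + 1))).toReal := fun k =>
    (EReal.coe_toReal (ne_top_of_mem_subdiffE hz₀ (hyg k)) (hnb _)).symm
  have hstep : Tendsto (fun k => x (k + 2) - x (k + 1)) atTop (𝓝 0) :=
    tendsto_zero_of_sufficient_decrease (half_pos hγ)
      (fun k => EReal.coe_le_coe_iff.1 (hG k ▸ hm (x (k + 1))))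
      (dca_descent hg (gammaConvexE_coe hh) hy hyg hG)
  have hxφ' : Tendsto (fun k => x (φ k + 1)) atTop (𝓝 xstar) := by
    have hmerge := (tendsto_add_atTop_iff_nat (f := fun k => x (k + 1) - x k) 1).1 hstep
    simpa using hxφ.add (hmerge.comp hφ.tendsto_atTop)
  obtain ⟨M, hM⟩ := exists_norm_le_of_mem_subdiffR hhcont C
  obtain ⟨ystar, -, ψ, hψ, hyψ⟩ := (isCompact_closedBall (0 : E n) M).tendsto_subseq
    fun k => mem_closedBall_zero_iff.2 (hM _ _ (hC (φ k)) (hy (φ k)))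
  refine ⟨ystar, mem_subdiffE_of_tendsto hglsc (hxφ'.comp hψ.tendsto_atTop) hyψ
    fun k => hyg _, ?_⟩
  rw [← subdiffE_coe]
  exact mem_subdiffE_of_tendsto (continuous_coe_real_ereal.comp hhcont).lowerSemicontinuous
    (hxφ.comp hψ.tendsto_atTop) hyψ fun k => (subdiffE_coe h _).symm ▸ hy _

theorem dca_subsequential_limits_stationary {n : ℕ}
    (g : E n → EReal) (h : E n → ℝ) (γ₁ γ₂ : ℝ)
    (hγ₁ : 0 ≤ γ₁) (hγ₂ : 0 ≤ γ₂) (hγ : 0 < γ₁ + γ₂)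
    (hnb : ∀ x, g x ≠ ⊥) (hp : ∃ x, g x ≠ ⊤) (hglsc : LowerSemicontinuous g)
    (hg : GammaConvexE g γ₁) (hhcont : Continuous h)
    (hh : ConvexOn ℝ Set.univ (fun x => h x - γ₂ / 2 * ‖x‖ ^ 2))
    (hbelow : ∃ m : ℝ, ∀ x : E n, (m : EReal) ≤ g x - (h x : EReal))
    (x y : ℕ → E n)
    (hy : ∀ k, y k ∈ subdiffR h (x k))
    (hx : ∀ k, x (k + 1) ∈ subdiffE (fconj g) (y k))
    (hbdd : ∃ C : ℝ, ∀ k, ‖x k‖ ≤ C) :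
    ∀ xstar : E n, ∀ φ : ℕ → ℕ, StrictMono φ →
      Filter.Tendsto (fun k => x (φ k)) Filter.atTop (nhds xstar) →
      (subdiffE g xstar ∩ subdiffR h xstar).Nonempty :=
  dca_subsequential_limits_stationary_general g h γ₁ γ₂ hγ₁ hγ hnb hp hglsc hg hhcont hh hbelow x y
    hy hx hbdd
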